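/- Let (ā_n)_{n≥1} be a sequence of nonnegative reals whose formal generating function w(z) = Σ_{n≥1} ā_n zⁿ satisfies the identity w = t z ε(1+w)/(1 - ε(1+w)) as formal power series, where t > 0 and 0 < ε < 1. Set c = 1/√ε - 1 and suppose t ≤ c². Then for each n ≥ 1, ā_n ≤ c · tⁿ · c^{-2n}. -/

import Mathlib

/-! At `x = c²/t` the truncations `Eₙ = ∑_{i<n} āᵢ xⁱ` of `w(x)` all stay below `c`. Rewrite the
identity as `(1 - ε) w = ε w² + tε z (1 + w)`. Because `ā₀ = 0`, the coefficients of `w²` up to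
`z^(n+1)` only involve `ā₁, …, āₙ`, so `(1 - ε) Eₙ₊₁ ≤ ε Eₙ² + tεx (1 + Eₙ)`, and `c` is a fixed
point of this recursion since `ε (1 + c)² = 1`. Hence `āₙ xⁿ ≤ c`. -/

open PowerSeries

open Finset

namespace Finset.Nat

theorem sum_range_sum_antidiagonal {M : Type*} [AddCommMonoid M] (n : ℕ) (F : ℕ × ℕ → M) :
    ∑ m ∈ range n, ∑ p ∈ antidiagonal m, F p =
      ∑ p ∈ range n ×ˢ range n with p.1 + p.2 < n, F p := by
  rw [← sum_fiberwise_of_maps_to (t := range n) (g := fun p : ℕ × ℕ => p.1 + p.2)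
    (fun p hp => by simp only [mem_filter] at hp; exact mem_range.2 hp.2)]
  refine sum_congr rfl fun m hm => sum_congr ?_ fun _ _ => rfl
  ext ⟨i, j⟩
  simp only [mem_range] at hm
  simp only [HasAntidiagonal.mem_antidiagonal, mem_filter, mem_product, mem_range]
  omega

end Finset.Nat

namespace PowerSeries

variable {R : Type*} [CommSemiring R]

theorem eval_trunc_eq_sum_range (n : ℕ) (f : R⟦X⟧) (x : R) :
    (trunc n f).eval x = ∑ i ∈ range n, coeff i f * x ^ i :=
  eval₂_trunc_eq_sum_range x (RingHom.id R) n f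

theorem eval_trunc_succ_X_mul (n : ℕ) (f : R⟦X⟧) (x : R) :
    (trunc (n + 1) (X * f)).eval x = x * (trunc n f).eval x := by
  simp only [eval_trunc_eq_sum_range, sum_range_succ', coeff_succ_X_mul, coeff_zero_X_mul,
    zero_mul, add_zero, mul_sum, pow_succ]
  exact sum_congr rfl fun i _ => by ring

section OrderedSemiring

variable [PartialOrder R] [IsOrderedRing R] {x : R}

theorem eval_trunc_nonneg {f : R⟦X⟧} (hf : ∀ i, 0 ≤ coeff i f) (hx : 0 ≤ x) (n : ℕ) :
    0 ≤ (trunc n f).eval x := by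
  rw [eval_trunc_eq_sum_range]
  exact sum_nonneg fun i _ => mul_nonneg (hf i) (pow_nonneg hx i)

theorem coeff_mul_pow_le_eval_trunc {f : R⟦X⟧} (hf : ∀ i, 0 ≤ coeff i f) (hx : 0 ≤ x) (n : ℕ) :
    coeff n f * x ^ n ≤ (trunc (n + 1) f).eval x := by
  rw [eval_trunc_eq_sum_range, sum_range_succ]
  exact le_add_of_nonneg_left (eval_trunc_eq_sum_range n f x ▸ eval_trunc_nonneg hf hx n)

theorem eval_trunc_one_le (n : ℕ) : (trunc n (1 : R⟦X⟧)).eval x ≤ 1 := by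
  cases n with
  | zero => simp
  | succ n => simp [trunc_one]

theorem eval_trunc_mul_le {f g : R⟦X⟧} (hf : ∀ i, 0 ≤ coeff i f) (hg : ∀ i, 0 ≤ coeff i g)
    (hx : 0 ≤ x) (n : ℕ) :
    (trunc n (f * g)).eval x ≤ (trunc n f).eval x * (trunc n g).eval x := by
  set F : ℕ × ℕ → R := fun p => coeff p.1 f * x ^ p.1 * (coeff p.2 g * x ^ p.2)
  have hterm : ∀ m, coeff m (f * g) * x ^ m = ∑ p ∈ antidiagonal m, F p := by
    intro m
    rw [coeff_mul, sum_mul]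
    refine sum_congr rfl fun p hp => ?_
    rw [← HasAntidiagonal.mem_antidiagonal.1 hp, pow_add]
    ring
  calc (trunc n (f * g)).eval x = ∑ p ∈ range n ×ˢ range n with p.1 + p.2 < n, F p := by
        simp only [eval_trunc_eq_sum_range, hterm, Nat.sum_range_sum_antidiagonal]
    _ ≤ ∑ p ∈ range n ×ˢ range n, F p :=
        sum_le_sum_of_subset_of_nonneg (filter_subset _ _) fun p _ _ =>
          mul_nonneg (mul_nonneg (hf _) (pow_nonneg hx _)) (mul_nonneg (hg _) (pow_nonneg hx _))
    _ = (trunc n f).eval x * (trunc n g).eval x := by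
        rw [eval_trunc_eq_sum_range, eval_trunc_eq_sum_range, sum_mul_sum, sum_product]

theorem eval_trunc_succ_mul_le {f g : R⟦X⟧} (hf : ∀ i, 0 ≤ coeff i f) (hg : ∀ i, 0 ≤ coeff i g)
    (hf0 : coeff 0 f = 0) (hg0 : coeff 0 g = 0) (hx : 0 ≤ x) (n : ℕ) :
    (trunc (n + 1) (f * g)).eval x ≤ (trunc n f).eval x * (trunc n g).eval x := by
  obtain ⟨f, rfl⟩ := (X_dvd_iff (φ := f)).2 (by rwa [← coeff_zero_eq_constantCoeff_apply])
  obtain ⟨g, rfl⟩ := (X_dvd_iff (φ := g)).2 (by rwa [← coeff_zero_eq_constantCoeff_apply])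
  cases n with
  | zero => simp [trunc_one_left]
  | succ n =>
    have hf' : ∀ i, 0 ≤ coeff i f := fun i => by simpa using hf (i + 1)
    have hg' : ∀ i, 0 ≤ coeff i g := fun i => by simpa using hg (i + 1)
    rw [show X * f * (X * g) = X * (X * (f * g)) by ring]
    simp only [eval_trunc_succ_X_mul]
    calc x * (x * (trunc n (f * g)).eval x)
        ≤ x * (x * ((trunc n f).eval x * (trunc n g).eval x)) := by
          gcongr
          exact eval_trunc_mul_le hf' hg' hx n
      _ = _ := by ring

end OrderedSemiring

theorem eval_trunc_le_of_majorant [LinearOrder R] [IsStrictOrderedRing R] {f : R⟦X⟧}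
    {u a b x y : R} (hf : ∀ i, 0 ≤ coeff i f) (hf0 : coeff 0 f = 0)
    (hfix : C u * f = C a * f ^ 2 + C b * X * (1 + f)) (hu : 0 < u) (ha : 0 ≤ a) (hb : 0 ≤ b) (hx : 0 ≤ x) (hy : 0 ≤ y)
    (hmaj : a * y ^ 2 + b * x * (1 + y) ≤ u * y) (n : ℕ) :
    (trunc n f).eval x ≤ y := by
  induction n with
  | zero => simpa using hy
  | succ n ih =>
    have hrec : u * (trunc (n + 1) f).eval x = a * (trunc (n + 1) (f * f)).eval x +
        b * (x * ((trunc n 1).eval x + (trunc n f).eval x)) := by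
      simpa [trunc_C_mul, sq, mul_assoc, eval_trunc_succ_X_mul] using
        congrArg (fun g => (trunc (n + 1) g).eval x) hfix
    have hsq : (trunc (n + 1) (f * f)).eval x ≤ y ^ 2 :=
      (eval_trunc_succ_mul_le hf hf hf0 hf0 hx n).trans
        (by rw [sq]; exact mul_le_mul ih ih (eval_trunc_nonneg hf hx n) hy)
    refine le_of_mul_le_mul_left ?_ hu
    rw [hrec, ← mul_assoc]
    refine le_trans ?_ hmaj
    gcongr
    exact eval_trunc_one_le n

end PowerSeries

theorem coeff_bound_of_generating_identity_general (t ε : ℝ) (ht : 0 < t) (hε0 : 0 < ε)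
    (hε1 : ε < 1) (c : ℝ) (hc : c = 1 / Real.sqrt ε - 1)
    (a : ℕ → ℝ) (ha : ∀ n, 1 ≤ n → 0 ≤ a n)
    (w : PowerSeries ℝ)
    (hw0 : PowerSeries.coeff 0 w = 0)
    (hwc : ∀ n, 1 ≤ n → PowerSeries.coeff n w = a n)
    (hid : w * (1 - PowerSeries.C ε * (1 + w))
      = PowerSeries.C (t * ε) * PowerSeries.X * (1 + w)) :
    ∀ n, 1 ≤ n → a n ≤ c * t ^ n / c ^ (2 * n) := by
  intro n hn
  have hsqrt : 0 < Real.sqrt ε := Real.sqrt_pos.2 hε0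
  have hc1 : 1 + c = 1 / Real.sqrt ε := by rw [hc]; ring
  have hεc : ε * (1 + c) ^ 2 = 1 := by
    rw [hc1, div_pow, Real.sq_sqrt hε0.le]; field_simp
  have hcpos : 0 < c := by
    have := one_lt_one_div hsqrt ((Real.sqrt_lt_sqrt hε0.le hε1).trans_eq Real.sqrt_one)
    linarith
  set x := c ^ 2 / t with hx
  have hxpos : 0 < x := by positivity
  have hw : ∀ i, 0 ≤ coeff i w := fun i =>
    i.eq_zero_or_pos.elim (fun h => h ▸ hw0.ge) fun h => hwc i h ▸ ha i h
  have hfix : C (1 - ε) * w = C ε * w ^ 2 + C (t * ε) * X * (1 + w) := by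
    rw [map_sub, map_one]; linear_combination hid
  have hmaj : ε * c ^ 2 + t * ε * x * (1 + c) ≤ (1 - ε) * c := by
    have htx : t * ε * x = ε * c ^ 2 := by rw [hx]; field_simp
    linear_combination (1 + c) * htx + c * hεc
  have hbound : a n * x ^ n ≤ c :=
    hwc n hn ▸ (coeff_mul_pow_le_eval_trunc hw hxpos.le n).trans
      (eval_trunc_le_of_majorant hw hw0 hfix (by linarith) hε0.le (by positivity) hxpos.le
        hcpos.le hmaj (n + 1))
  rwa [← le_div_iff₀ (by positivity), hx, div_pow, ← pow_mul, div_div_eq_mul_div] at hbound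

/-- If the generating function `w(z) = Σ_{n≥1} ā_n zⁿ` of nonnegative coefficients
satisfies `w = t z ε(1+w)/(1-ε(1+w))` as formal power series (equivalently
`w(1 - ε(1+w)) = tε z (1+w)`), `c = 1/√ε - 1`, and `t ≤ c²`, then
`ā_n ≤ c tⁿ c^{-2n}` for all `n ≥ 1`. -/
theorem coeff_bound_of_generating_identity (t ε : ℝ) (ht : 0 < t) (hε0 : 0 < ε)
    (hε1 : ε < 1) (c : ℝ) (hc : c = 1 / Real.sqrt ε - 1) (htc : t ≤ c ^ 2)
    (a : ℕ → ℝ) (ha : ∀ n, 1 ≤ n → 0 ≤ a n)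
    (w : PowerSeries ℝ)
    (hw0 : PowerSeries.coeff 0 w = 0)
    (hwc : ∀ n, 1 ≤ n → PowerSeries.coeff n w = a n)
    (hid : w * (1 - PowerSeries.C ε * (1 + w))
      = PowerSeries.C (t * ε) * PowerSeries.X * (1 + w)) :
    ∀ n, 1 ≤ n → a n ≤ c * t ^ n / c ^ (2 * n) :=
  coeff_bound_of_generating_identity_general t ε ht hε0 hε1 c hc a ha w hw0 hwc hid
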